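/- Let p ≥ 1, let Σ₀ ∈ ℝ^{p×p} be symmetric positive definite with symmetric inverse Ω₀ = Σ₀⁻¹, let e ∈ ℝᵖ be a standard basis vector, and set β̂ = Ω₀e. Let Σ' ∈ ℝ^{p×p} and λ ≥ 0 satisfy ‖Ω₀‖_{L1} · |Σ' − Σ₀|_∞ ≤ λ, and let β ∈ ℝᵖ satisfy |Σ'β − e|_∞ ≤ λ. Then |β|₁ ≤ |β̂|₁ + 3pλ‖Ω₀‖_{L1} + pλ|β|₁. -/
import Mathlib


open Matrix

/-- Elementwise ℓ∞ norm of a matrix: `max_{i,j} |A i j|`. -/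
noncomputable def matInf {p : ℕ} (A : Matrix (Fin p) (Fin p) ℝ) : ℝ :=
  ⨆ i, ⨆ j, |A i j|

/-- Matrix L₁ norm: maximum absolute column sum. -/
noncomputable def matL1 {p : ℕ} (A : Matrix (Fin p) (Fin p) ℝ) : ℝ :=
  ⨆ j, ∑ i, |A i j|

/-- Vector ℓ∞ norm. -/
noncomputable def vecInf {p : ℕ} (v : Fin p → ℝ) : ℝ :=
  ⨆ i, |v i|

/-- Vector ℓ₁ norm. -/
def vecL1 {p : ℕ} (v : Fin p → ℝ) : ℝ :=
  ∑ i, |v i|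

lemma abs_le_vecInf {p : ℕ} (v : Fin p → ℝ) (i : Fin p) : |v i| ≤ vecInf v := by
  haveI : Nonempty (Fin p) := ⟨i⟩
  exact le_ciSup (f := fun k => |v k|) (Set.Finite.bddAbove (Set.finite_range _)) i

lemma vecL1_le_card_vecInf {p : ℕ} (v : Fin p → ℝ) : vecL1 v ≤ (p : ℝ) * vecInf v := by
  calc vecL1 v = ∑ i, |v i| := rfl
  _ ≤ ∑ _i : Fin p, vecInf v := Finset.sum_le_sum fun i _ => abs_le_vecInf v i
  _ = (p : ℝ) * vecInf v := by simp [Finset.sum_const, nsmul_eq_mul]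

lemma abs_le_matInf {p : ℕ} (A : Matrix (Fin p) (Fin p) ℝ) (i j : Fin p) :
    |A i j| ≤ matInf A := by
  haveI : Nonempty (Fin p) := ⟨i⟩
  have h1 : |A i j| ≤ ⨆ k, |A i k| :=
    le_ciSup (f := fun k => |A i k|) (Set.Finite.bddAbove (Set.finite_range _)) j
  exact h1.trans (le_ciSup (f := fun i => ⨆ k, |A i k|)
    (Set.Finite.bddAbove (Set.finite_range _)) i)

lemma colsum_le_matL1 {p : ℕ} (A : Matrix (Fin p) (Fin p) ℝ) (j : Fin p) :
    ∑ i, |A i j| ≤ matL1 A := by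
  haveI : Nonempty (Fin p) := ⟨j⟩
  exact le_ciSup (f := fun k => ∑ i, |A i k|) (Set.Finite.bddAbove (Set.finite_range _)) j

lemma matL1_nonneg {p : ℕ} (hp : 0 < p) (A : Matrix (Fin p) (Fin p) ℝ) : 0 ≤ matL1 A := by
  have j : Fin p := ⟨0, hp⟩
  exact le_trans (Finset.sum_nonneg fun i _ => abs_nonneg _) (colsum_le_matL1 A j)

lemma matInf_nonneg {p : ℕ} (hp : 0 < p) (A : Matrix (Fin p) (Fin p) ℝ) : 0 ≤ matInf A := by
  have i : Fin p := ⟨0, hp⟩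
  exact le_trans (abs_nonneg _) (abs_le_matInf A i i)

lemma vecL1_nonneg {p : ℕ} (v : Fin p → ℝ) : 0 ≤ vecL1 v :=
  Finset.sum_nonneg fun i _ => abs_nonneg _

lemma vecL1_mulVec_le {p : ℕ} (A : Matrix (Fin p) (Fin p) ℝ) (v : Fin p → ℝ) :
    vecL1 (A.mulVec v) ≤ matL1 A * vecL1 v := by
  calc vecL1 (A.mulVec v) = ∑ i, |∑ j, A i j * v j| := rfl
  _ ≤ ∑ i, ∑ j, |A i j * v j| :=
      Finset.sum_le_sum fun i _ => Finset.abs_sum_le_sum_abs _ _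
  _ = ∑ j, (∑ i, |A i j|) * |v j| := by
      rw [Finset.sum_comm]
      simp [abs_mul, Finset.sum_mul]
  _ ≤ ∑ j, matL1 A * |v j| :=
      Finset.sum_le_sum fun j _ =>
        mul_le_mul_of_nonneg_right (colsum_le_matL1 A j) (abs_nonneg _)
  _ = matL1 A * vecL1 v := by rw [← Finset.mul_sum]; rfl

lemma vecInf_mulVec_le {p : ℕ} (hp : 0 < p) (A : Matrix (Fin p) (Fin p) ℝ) (v : Fin p → ℝ) :
    vecInf (A.mulVec v) ≤ matInf A * vecL1 v := by
  haveI : Nonempty (Fin p) := ⟨⟨0, hp⟩⟩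
  refine ciSup_le fun i => ?_
  calc |∑ j, A i j * v j| ≤ ∑ j, |A i j * v j| := Finset.abs_sum_le_sum_abs _ _
  _ ≤ ∑ j, matInf A * |v j| := by
      refine Finset.sum_le_sum fun j _ => ?_
      rw [abs_mul]
      exact mul_le_mul_of_nonneg_right (abs_le_matInf A i j) (abs_nonneg _)
  _ = matInf A * vecL1 v := by rw [← Finset.mul_sum]; rfl

lemma vecInf_add_le {p : ℕ} (hp : 0 < p) (u w : Fin p → ℝ) :
    vecInf (u + w) ≤ vecInf u + vecInf w := by
  haveI : Nonempty (Fin p) := ⟨⟨0, hp⟩⟩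
  refine ciSup_le fun i => ?_
  exact (abs_add_le _ _).trans (add_le_add (abs_le_vecInf u i) (abs_le_vecInf w i))

/-- ℓ₁ norm bound for one feasible column (second chain in the proof of Lemma 1). -/
theorem stmt7 {p : ℕ} (hp : 1 ≤ p)
    (S₀ : Matrix (Fin p) (Fin p) ℝ) (hSsym : S₀.IsSymm) (hSpd : S₀.PosDef)
    (Ω₀ : Matrix (Fin p) (Fin p) ℝ) (hΩ : Ω₀ = S₀⁻¹) (hΩsym : Ω₀.IsSymm)
    (i₀ : Fin p) (βhat : Fin p → ℝ) (hβhat : βhat = Ω₀.mulVec (Pi.single i₀ 1))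
    (S' : Matrix (Fin p) (Fin p) ℝ) (lam : ℝ) (hlam : 0 ≤ lam)
    (hlow : matL1 Ω₀ * matInf (S' - S₀) ≤ lam)
    (β : Fin p → ℝ) (hstop : vecInf (S'.mulVec β - Pi.single i₀ 1) ≤ lam) :
    vecL1 β ≤ vecL1 βhat + 3 * (p : ℝ) * lam * matL1 Ω₀ + (p : ℝ) * lam * vecL1 β := by
  have hp0 : 0 < p := hp
  set e : Fin p → ℝ := Pi.single i₀ 1 with he
  set w : Fin p → ℝ := S₀.mulVec β - e with hw
  -- Ω₀ * S₀ = 1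
  have hdet : IsUnit S₀.det := isUnit_iff_ne_zero.mpr hSpd.det_pos.ne'
  have hinv : Ω₀ * S₀ = 1 := by rw [hΩ]; exact Matrix.nonsing_inv_mul S₀ hdet
  have hkey : β - βhat = Ω₀.mulVec w := by
    rw [hw, Matrix.mulVec_sub, Matrix.mulVec_mulVec, hinv, Matrix.one_mulVec, hβhat]
  -- decomposition of w
  have hdecomp : w = (S₀ - S').mulVec β + (S'.mulVec β - e) := by
    rw [hw, Matrix.sub_mulVec, sub_add_sub_cancel]
  have hInfsym : matInf (S₀ - S') = matInf (S' - S₀) := by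
    simp [matInf, Matrix.sub_apply, abs_sub_comm]
  have h1 : vecInf w ≤ matInf (S' - S₀) * vecL1 β + lam := by
    calc vecInf w ≤ vecInf ((S₀ - S').mulVec β) + vecInf (S'.mulVec β - e) := by
          rw [hdecomp]; exact vecInf_add_le hp0 _ _
    _ ≤ matInf (S₀ - S') * vecL1 β + lam :=
        add_le_add (vecInf_mulVec_le hp0 _ _) hstop
    _ = matInf (S' - S₀) * vecL1 β + lam := by rw [hInfsym]
  -- bound on vecL1 (β - βhat)
  have h2 : vecL1 (β - βhat) ≤ (p : ℝ) * lam * vecL1 β + (p : ℝ) * lam * matL1 Ω₀ := by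
    have hb : vecL1 (β - βhat) ≤ matL1 Ω₀ * ((p : ℝ) * vecInf w) := by
      rw [hkey]
      exact (vecL1_mulVec_le Ω₀ w).trans
        (mul_le_mul_of_nonneg_left (vecL1_le_card_vecInf w) (matL1_nonneg hp0 Ω₀))
    have hm : 0 ≤ matL1 Ω₀ := matL1_nonneg hp0 Ω₀
    have hd : 0 ≤ matInf (S' - S₀) := matInf_nonneg hp0 _
    have hx : 0 ≤ vecL1 β := vecL1_nonneg β
    have hpr : (0 : ℝ) ≤ (p : ℝ) := Nat.cast_nonneg p
    nlinarith [mul_le_mul_of_nonneg_left h1 hm,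
      mul_le_mul_of_nonneg_right hlow hx]
  -- triangle inequality
  have htri : vecL1 β ≤ vecL1 βhat + vecL1 (β - βhat) := by
    rw [vecL1, vecL1, vecL1, ← Finset.sum_add_distrib]
    refine Finset.sum_le_sum fun i _ => ?_
    have : β i = βhat i + (β i - βhat i) := by ring
    rw [this]
    exact abs_add_le _ _
  have hm : 0 ≤ matL1 Ω₀ := matL1_nonneg hp0 Ω₀
  have hpr : (0 : ℝ) ≤ (p : ℝ) := Nat.cast_nonneg p
  nlinarith [mul_nonneg (mul_nonneg hpr hlam) hm]
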